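/- arXiv:2208.07592 — 2 statements merged into one kernel-verified Lean document; each statement's English description precedes it below -/
import Mathlib

section
/- Let f(n) = (1/2)·C(N,n)·[P^n·(1−P)^{N−n} − Q^{N−n}·(1−Q)^n] denote the discrete derivative of Θ̂ at n, where 0 < P < 1/2 and 0 < Q < 1/2. Then for integer n, f(n) > 0 whenever n < n* and f(n) < 0 whenever n > n*, where n* = N·ln(Q/(1−P))/(ln(P/(1−P)) + ln(Q/(1−Q))). In particular, Θ̂ is maximized over {0,1,...,N} at either ⌊n*⌋+1 or ⌈n*⌉ (i.e., at ⌈n*⌉ when n* is not an integer). -/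
private lemma chain_up (f : ℕ → ℝ) :
    ∀ b a, a ≤ b → (∀ j, a ≤ j → j < b → f j ≤ f (j + 1)) → f a ≤ f b := by
  intro b
  induction b with
  | zero =>
    intro a h _
    have : a = 0 := by omega
    simp [this]
  | succ n ih =>
    intro a h hstep
    rcases Nat.lt_or_ge a (n + 1) with h' | h'
    · have h1 : f a ≤ f n := ih a (by omega) (fun j hj hj' => hstep j hj (by omega))
      have h2 : f n ≤ f (n + 1) := hstep n (by omega) (by omega)
      linarith
    · have : a = n + 1 := by omega
      simp [this]

theorem sign_pattern_and_maximizer (N : ℕ) (hN : 1 ≤ N) (P Q : ℝ)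
    (hP0 : 0 < P) (hP : P < 1/2) (hQ0 : 0 < Q) (hQ : Q < 1/2) :
    (∀ n : ℕ, n ≤ N →
      (((n : ℝ) < (N : ℝ) * Real.log (Q / (1 - P)) /
          (Real.log (P / (1 - P)) + Real.log (Q / (1 - Q))) →
        0 < (1/2) * (N.choose n : ℝ) * (P ^ n * (1 - P) ^ (N - n) - Q ^ (N - n) * (1 - Q) ^ n)) ∧
      ((N : ℝ) * Real.log (Q / (1 - P)) /
          (Real.log (P / (1 - P)) + Real.log (Q / (1 - Q))) < (n : ℝ) →
        (1/2) * (N.choose n : ℝ) * (P ^ n * (1 - P) ^ (N - n) - Q ^ (N - n) * (1 - Q) ^ n) < 0)))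
    ∧ (∃ m : ℕ, m ≤ N ∧
        ((m : ℤ) = ⌊(N : ℝ) * Real.log (Q / (1 - P)) /
            (Real.log (P / (1 - P)) + Real.log (Q / (1 - Q)))⌋ + 1 ∨
         (m : ℤ) = ⌈(N : ℝ) * Real.log (Q / (1 - P)) /
            (Real.log (P / (1 - P)) + Real.log (Q / (1 - Q)))⌉) ∧
        ∀ k : ℕ, k ≤ N →
          (1/2) * ∑ l ∈ Finset.range k, (N.choose l : ℝ) * P ^ l * (1 - P) ^ (N - l)
            + (1/2) * ∑ l ∈ Finset.range (N - k + 1), (N.choose l : ℝ) * Q ^ l * (1 - Q) ^ (N - l)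
          ≤ (1/2) * ∑ l ∈ Finset.range m, (N.choose l : ℝ) * P ^ l * (1 - P) ^ (N - l)
            + (1/2) * ∑ l ∈ Finset.range (N - m + 1), (N.choose l : ℝ) * Q ^ l * (1 - Q) ^ (N - l)) := by
  have h1P : (0:ℝ) < 1 - P := by linarith
  have h1Q : (0:ℝ) < 1 - Q := by linarith
  set L : ℝ := Real.log (Q / (1 - P)) with hLdef
  set D : ℝ := Real.log (P / (1 - P)) + Real.log (Q / (1 - Q)) with hDdef
  have hD : D < 0 := by
    have h1 : Real.log (P / (1 - P)) < 0 :=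
      Real.log_neg (by positivity) (by rw [div_lt_one h1P]; linarith)
    have h2 : Real.log (Q / (1 - Q)) < 0 :=
      Real.log_neg (by positivity) (by rw [div_lt_one h1Q]; linarith)
    rw [hDdef]; linarith
  have hL : L < 0 := by
    rw [hLdef]
    exact Real.log_neg (by positivity) (by rw [div_lt_one h1P]; linarith)
  set s : ℝ := (N : ℝ) * L / D with hsdef
  clear_value L D s
  have hNpos : (0:ℝ) < N := by exact_mod_cast hN
  have hs_pos : 0 < s := by
    rw [hsdef]
    exact div_pos_of_neg_of_neg (mul_neg_of_pos_of_neg hNpos hL) hD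
  have hDL : D < L := by
    have h3 : Real.log (P / (1 - Q)) < 0 :=
      Real.log_neg (by positivity) (by rw [div_lt_one h1Q]; linarith)
    have e : D - L = Real.log (P / (1 - Q)) := by
      rw [hDdef, hLdef, Real.log_div hP0.ne' h1P.ne', Real.log_div hQ0.ne' h1Q.ne',
        Real.log_div hQ0.ne' h1P.ne', Real.log_div hP0.ne' h1Q.ne']
      ring
    linarith [e, h3]
  have hsN : s < N := by
    rw [hsdef, div_lt_iff_of_neg hD]
    exact mul_lt_mul_of_pos_left hDL hNpos
  -- key log identity
  have hlog : ∀ n : ℕ, n ≤ N →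
      Real.log (P ^ n * (1 - P) ^ (N - n)) - Real.log (Q ^ (N - n) * (1 - Q) ^ n)
        = (n : ℝ) * D - (N : ℝ) * L := by
    intro n hn
    have hcast : ((N - n : ℕ) : ℝ) = (N : ℝ) - n := by
      have := Nat.cast_sub hn (R := ℝ); exact this
    rw [Real.log_mul (by positivity) (by positivity),
      Real.log_mul (by positivity) (by positivity),
      Real.log_pow, Real.log_pow, Real.log_pow, Real.log_pow, hcast, hDdef, hLdef,
      Real.log_div hP0.ne' h1P.ne', Real.log_div hQ0.ne' h1Q.ne',
      Real.log_div hQ0.ne' h1P.ne']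
    ring
  have hPpos : ∀ n : ℕ, (0:ℝ) < P ^ n * (1 - P) ^ (N - n) := fun n => by positivity
  have hQpos : ∀ n : ℕ, (0:ℝ) < Q ^ (N - n) * (1 - Q) ^ n := fun n => by positivity
  have key_lt : ∀ n : ℕ, n ≤ N → (n : ℝ) < s →
      Q ^ (N - n) * (1 - Q) ^ n < P ^ n * (1 - P) ^ (N - n) := by
    intro n hn h
    rw [hsdef, lt_div_iff_of_neg hD] at h
    have hlt : Real.log (Q ^ (N - n) * (1 - Q) ^ n) < Real.log (P ^ n * (1 - P) ^ (N - n)) := by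
      have := hlog n hn; linarith
    exact (Real.log_lt_log_iff (hQpos n) (hPpos n)).mp hlt
  have key_gt : ∀ n : ℕ, n ≤ N → s < (n : ℝ) →
      P ^ n * (1 - P) ^ (N - n) < Q ^ (N - n) * (1 - Q) ^ n := by
    intro n hn h
    rw [hsdef, div_lt_iff_of_neg hD] at h
    have hlt : Real.log (P ^ n * (1 - P) ^ (N - n)) < Real.log (Q ^ (N - n) * (1 - Q) ^ n) := by
      have := hlog n hn; linarith
    exact (Real.log_lt_log_iff (hPpos n) (hQpos n)).mp hlt
  have key_le : ∀ n : ℕ, n ≤ N → (n : ℝ) ≤ s →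
      Q ^ (N - n) * (1 - Q) ^ n ≤ P ^ n * (1 - P) ^ (N - n) := by
    intro n hn h
    rw [hsdef, le_div_iff_of_neg hD] at h
    have hle : Real.log (Q ^ (N - n) * (1 - Q) ^ n) ≤ Real.log (P ^ n * (1 - P) ^ (N - n)) := by
      have := hlog n hn; linarith
    exact (Real.log_le_log_iff (hQpos n) (hPpos n)).mp hle
  constructor
  · intro n hn
    have hch : (0:ℝ) < N.choose n := by exact_mod_cast Nat.choose_pos hn
    constructor
    · intro h
      have := key_lt n hn h
      nlinarith
    · intro h
      have := key_gt n hn h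
      nlinarith
  · -- maximizer part
    set Θ : ℕ → ℝ := fun k =>
      (1/2) * ∑ l ∈ Finset.range k, (N.choose l : ℝ) * P ^ l * (1 - P) ^ (N - l)
        + (1/2) * ∑ l ∈ Finset.range (N - k + 1), (N.choose l : ℝ) * Q ^ l * (1 - Q) ^ (N - l)
      with hΘdef
    clear_value Θ
    have step_eq : ∀ j : ℕ, j + 1 ≤ N →
        Θ (j + 1) - Θ j =
          (1/2) * (N.choose j : ℝ) * (P ^ j * (1 - P) ^ (N - j) - Q ^ (N - j) * (1 - Q) ^ j) := by
      intro j hj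
      have hexp : N - (N - j) = j := by omega
      have hq : ∀ g : ℕ → ℝ, ∑ l ∈ Finset.range (N - j + 1), g l
          = ∑ l ∈ Finset.range (N - (j + 1) + 1), g l + g (N - j) := by
        intro g
        have e1 : N - j + 1 = (N - (j + 1) + 1) + 1 := by omega
        rw [e1, Finset.sum_range_succ]
        congr 2
        omega
      simp only [hΘdef]
      rw [hq, Finset.sum_range_succ (fun l => (N.choose l : ℝ) * P ^ l * (1 - P) ^ (N - l)) j,
        hexp, Nat.choose_symm (by omega : j ≤ N)]
      ring
    set m : ℕ := ⌊s⌋.toNat + 1 with hmdef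
    have hfl0 : (0:ℤ) ≤ ⌊s⌋ := Int.floor_nonneg.mpr hs_pos.le
    have hflN : ⌊s⌋ < (N : ℤ) := Int.floor_lt.mpr (by exact_mod_cast hsN)
    have hmZ : (m : ℤ) = ⌊s⌋ + 1 := by
      rw [hmdef]; push_cast [Int.toNat_of_nonneg hfl0]; ring
    clear_value m
    have hmN : m ≤ N := by omega
    refine ⟨m, hmN, Or.inl hmZ, ?_⟩
    intro k hk
    suffices hfin : Θ k ≤ Θ m by simpa only [hΘdef] using hfin
    have hup : ∀ j, j < m → Θ j ≤ Θ (j + 1) := by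
      intro j hj
      have hjN : j + 1 ≤ N := by omega
      have hjs : (j : ℝ) ≤ s := by
        have hzj : (j : ℤ) ≤ ⌊s⌋ := by omega
        exact_mod_cast Int.le_floor.mp hzj
      have hdiff := key_le j (by omega) hjs
      have hch : (0:ℝ) ≤ (N.choose j : ℝ) := by positivity
      have hst := step_eq j hjN
      have h0 : 0 ≤ (1/2) * (N.choose j : ℝ)
          * (P ^ j * (1 - P) ^ (N - j) - Q ^ (N - j) * (1 - Q) ^ j) :=
        mul_nonneg (by positivity) (sub_nonneg.mpr hdiff)
      linarith only [hst, h0]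
    have hdown : ∀ j, m ≤ j → j + 1 ≤ N → Θ (j + 1) ≤ Θ j := by
      intro j hj hjN
      have hjs : s < (j : ℝ) := by
        have h1 : s < (⌊s⌋ : ℝ) + 1 := Int.lt_floor_add_one s
        have h2 : ((⌊s⌋ : ℝ) + 1) ≤ (j : ℝ) := by
          have : (⌊s⌋ + 1 : ℤ) ≤ (j : ℤ) := by omega
          exact_mod_cast this
        linarith
      have hdiff := (key_gt j (by omega) hjs).le
      have hst := step_eq j hjN
      have h0 : (1/2) * (N.choose j : ℝ)
          * (P ^ j * (1 - P) ^ (N - j) - Q ^ (N - j) * (1 - Q) ^ j) ≤ 0 :=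
        mul_nonpos_of_nonneg_of_nonpos (by positivity) (sub_nonpos.mpr hdiff)
      linarith only [hst, h0]
    rcases Nat.le_total k m with hkm | hkm
    · exact chain_up Θ m k hkm (fun j _ hj => hup j hj)
    · have := chain_up (fun j => -Θ j) k m hkm
        (fun j hj hj' => by
          simp only [neg_le_neg_iff]
          exact hdown j hj (by omega))
      exact neg_le_neg_iff.mp this
end

section
/- For independent detectors with symmetric error rate p ∈ (0, 1/2), the majority-voting error probability with 2k+1 detectors, E(k) = Σ_{l=k+1}^{2k+1} C(2k+1, l)·p^l·(1−p)^{2k+1−l}, is strictly decreasing in k. -/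
lemma majority_key (p : ℝ) (k : ℕ) :
    (∑ l ∈ Finset.Icc (k + 1 + 1) (2 * (k + 1) + 1),
      ((2 * (k + 1) + 1).choose l : ℝ) * p ^ l * (1 - p) ^ (2 * (k + 1) + 1 - l))
    = (∑ l ∈ Finset.Icc (k + 1) (2 * k + 1),
      ((2 * k + 1).choose l : ℝ) * p ^ l * (1 - p) ^ (2 * k + 1 - l))
      + ((2 * k + 1).choose k : ℝ) * p ^ (k + 1) * (1 - p) ^ (k + 1) * (2 * p - 1) := by
  set t : ℕ → ℝ := fun j => ((2 * k + 1).choose j : ℝ) * p ^ j * (1 - p) ^ (2 * k + 1 - j)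
    with ht
  have tdef : ∀ j, t j = ((2 * k + 1).choose j : ℝ) * p ^ j * (1 - p) ^ (2 * k + 1 - j) :=
    fun j => rfl
  -- rewrite both Icc sums as range sums
  have hR : (∑ l ∈ Finset.Icc (k + 1) (2 * k + 1),
      ((2 * k + 1).choose l : ℝ) * p ^ l * (1 - p) ^ (2 * k + 1 - l))
      = ∑ i ∈ Finset.range (k + 1), t (k + 1 + i) := by
    rw [← Finset.Ico_add_one_right_eq_Icc, Finset.sum_Ico_eq_sum_range]
    have h1 : 2 * k + 1 + 1 - (k + 1) = k + 1 := by omega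
    rw [h1]
  have hL : (∑ l ∈ Finset.Icc (k + 1 + 1) (2 * (k + 1) + 1),
      ((2 * (k + 1) + 1).choose l : ℝ) * p ^ l * (1 - p) ^ (2 * (k + 1) + 1 - l))
      = ∑ i ∈ Finset.range (k + 2),
        ((2 * k + 3).choose (k + 2 + i) : ℝ) * p ^ (k + 2 + i) * (1 - p) ^ (k + 1 - i) := by
    rw [← Finset.Ico_add_one_right_eq_Icc, Finset.sum_Ico_eq_sum_range]
    have h1 : 2 * (k + 1) + 1 + 1 - (k + 1 + 1) = k + 2 := by omega
    rw [h1]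
    refine Finset.sum_congr rfl fun i hi => ?_
    simp only [Finset.mem_range] at hi
    have h2 : k + 1 + 1 + i = k + 2 + i := by omega
    have h3 : 2 * (k + 1) + 1 = 2 * k + 3 := by omega
    rw [h2, h3]
    have h4 : 2 * k + 3 - (k + 2 + i) = k + 1 - i := by omega
    rw [h4]
  rw [hL, hR]
  set S : ℝ := ∑ i ∈ Finset.range (k + 1), t (k + 1 + i) with hS
  -- Pascal twice
  have hPascal : ∀ i, ((2 * k + 3).choose (k + 2 + i) : ℝ)
      = ((2 * k + 1).choose (k + i) : ℝ) + 2 * ((2 * k + 1).choose (k + 1 + i) : ℝ)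
        + ((2 * k + 1).choose (k + 2 + i) : ℝ) := by
    intro i
    have e1 : (2 * k + 3).choose (k + 2 + i)
        = (2 * k + 2).choose (k + 1 + i) + (2 * k + 2).choose (k + 2 + i) := by
      rw [show 2 * k + 3 = (2 * k + 2) + 1 by omega, show k + 2 + i = (k + 1 + i) + 1 by omega]
      exact Nat.choose_succ_succ _ _
    have e2 : (2 * k + 2).choose (k + 1 + i)
        = (2 * k + 1).choose (k + i) + (2 * k + 1).choose (k + 1 + i) := by
      rw [show 2 * k + 2 = (2 * k + 1) + 1 by omega, show k + 1 + i = (k + i) + 1 by omega]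
      exact Nat.choose_succ_succ _ _
    have e3 : (2 * k + 2).choose (k + 2 + i)
        = (2 * k + 1).choose (k + 1 + i) + (2 * k + 1).choose (k + 2 + i) := by
      rw [show 2 * k + 2 = (2 * k + 1) + 1 by omega, show k + 2 + i = (k + 1 + i) + 1 by omega]
      exact Nat.choose_succ_succ _ _
    rw [e1, e2, e3]
    push_cast
    ring
  -- split LHS into three sums
  have hsplit : ∑ i ∈ Finset.range (k + 2),
        ((2 * k + 3).choose (k + 2 + i) : ℝ) * p ^ (k + 2 + i) * (1 - p) ^ (k + 1 - i)
      = (∑ i ∈ Finset.range (k + 2),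
          ((2 * k + 1).choose (k + i) : ℝ) * p ^ (k + 2 + i) * (1 - p) ^ (k + 1 - i))
        + (∑ i ∈ Finset.range (k + 2),
          2 * ((2 * k + 1).choose (k + 1 + i) : ℝ) * p ^ (k + 2 + i) * (1 - p) ^ (k + 1 - i))
        + (∑ i ∈ Finset.range (k + 2),
          ((2 * k + 1).choose (k + 2 + i) : ℝ) * p ^ (k + 2 + i) * (1 - p) ^ (k + 1 - i)) := by
    rw [← Finset.sum_add_distrib, ← Finset.sum_add_distrib]
    refine Finset.sum_congr rfl fun i _ => ?_
    rw [hPascal i]; ring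
  rw [hsplit]
  -- sum A = p^2 * (t k + S)
  have hA : (∑ i ∈ Finset.range (k + 2),
        ((2 * k + 1).choose (k + i) : ℝ) * p ^ (k + 2 + i) * (1 - p) ^ (k + 1 - i))
      = p ^ 2 * (t k + S) := by
    have h1 : ∀ i ∈ Finset.range (k + 2),
        ((2 * k + 1).choose (k + i) : ℝ) * p ^ (k + 2 + i) * (1 - p) ^ (k + 1 - i)
        = p ^ 2 * t (k + i) := by
      intro i hi
      simp only [Finset.mem_range] at hi
      rw [tdef (k + i), show 2 * k + 1 - (k + i) = k + 1 - i by omega,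
        show k + 2 + i = (k + i) + 2 by omega]
      ring
    rw [Finset.sum_congr rfl h1, ← Finset.mul_sum]
    congr 1
    rw [Finset.sum_range_succ' (fun i => t (k + i)) (k + 1)]
    have h2 : ∑ i ∈ Finset.range (k + 1), t (k + (i + 1)) = S := by
      refine Finset.sum_congr rfl fun i _ => ?_
      congr 1
      omega
    rw [h2]
    simp [add_comm]
  -- sum B = 2*p*(1-p) * S
  have hB : (∑ i ∈ Finset.range (k + 2),
        2 * ((2 * k + 1).choose (k + 1 + i) : ℝ) * p ^ (k + 2 + i) * (1 - p) ^ (k + 1 - i))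
      = 2 * p * (1 - p) * S := by
    rw [Finset.sum_range_succ]
    have hz : ((2 * k + 1).choose (k + 1 + (k + 1)) : ℝ) = 0 := by
      rw [Nat.choose_eq_zero_of_lt (by omega)]; norm_num
    rw [hz]
    have h1 : ∀ i ∈ Finset.range (k + 1),
        2 * ((2 * k + 1).choose (k + 1 + i) : ℝ) * p ^ (k + 2 + i) * (1 - p) ^ (k + 1 - i)
        = 2 * p * (1 - p) * t (k + 1 + i) := by
      intro i hi
      simp only [Finset.mem_range] at hi
      rw [tdef (k + 1 + i), show 2 * k + 1 - (k + 1 + i) = k - i by omega,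
        show k + 1 - i = (k - i) + 1 by omega, show k + 2 + i = (k + 1 + i) + 1 by omega]
      ring
    rw [Finset.sum_congr rfl h1, ← Finset.mul_sum, ← hS]
    ring
  -- sum C = (1-p)^2 * (S - t (k+1))
  have hC : (∑ i ∈ Finset.range (k + 2),
        ((2 * k + 1).choose (k + 2 + i) : ℝ) * p ^ (k + 2 + i) * (1 - p) ^ (k + 1 - i))
      = (1 - p) ^ 2 * (S - t (k + 1)) := by
    have h1 : ∀ i ∈ Finset.range (k + 2),
        ((2 * k + 1).choose (k + 2 + i) : ℝ) * p ^ (k + 2 + i) * (1 - p) ^ (k + 1 - i)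
        = (1 - p) ^ 2 * t (k + 2 + i) := by
      intro i hi
      simp only [Finset.mem_range] at hi
      by_cases hik : i + 1 ≤ k
      · rw [tdef (k + 2 + i), show 2 * k + 1 - (k + 2 + i) = k - 1 - i by omega,
          show k + 1 - i = (k - 1 - i) + 2 by omega]
        ring
      · have hz : ((2 * k + 1).choose (k + 2 + i) : ℝ) = 0 := by
          rw [Nat.choose_eq_zero_of_lt (by omega)]; norm_num
        rw [tdef (k + 2 + i), hz]
        ring
    rw [Finset.sum_congr rfl h1, ← Finset.mul_sum]
    congr 1
    -- ∑_{i<k+2} t (k+2+i) = S - t (k+1)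
    have h2 : ∑ i ∈ Finset.range (k + 3), t (k + 1 + i)
        = ∑ i ∈ Finset.range (k + 2), t (k + 2 + i) + t (k + 1) := by
      rw [Finset.sum_range_succ' (fun i => t (k + 1 + i)) (k + 2)]
      congr 1
      refine Finset.sum_congr rfl fun i _ => ?_
      congr 1
      omega
    have h3 : ∑ i ∈ Finset.range (k + 3), t (k + 1 + i) = S := by
      rw [Finset.sum_range_succ, Finset.sum_range_succ, ← hS]
      have hz1 : t (k + 1 + (k + 1)) = 0 := by
        rw [tdef, Nat.choose_eq_zero_of_lt (by omega)]; norm_num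
      have hz2 : t (k + 1 + (k + 2)) = 0 := by
        rw [tdef, Nat.choose_eq_zero_of_lt (by omega)]; norm_num
      rw [hz1, hz2]; ring
    rw [h3] at h2
    linarith
  rw [hA, hB, hC]
  -- final algebra
  have htk : t k = ((2 * k + 1).choose k : ℝ) * p ^ k * (1 - p) ^ (k + 1) := by
    rw [tdef k, show 2 * k + 1 - k = k + 1 by omega]
  have htk1 : t (k + 1) = ((2 * k + 1).choose k : ℝ) * p ^ (k + 1) * (1 - p) ^ k := by
    have hc : (2 * k + 1).choose (k + 1) = (2 * k + 1).choose k := by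
      have h := Nat.choose_symm (n := 2 * k + 1) (k := k) (by omega)
      rwa [show 2 * k + 1 - k = k + 1 by omega] at h
    rw [tdef (k + 1), hc, show 2 * k + 1 - (k + 1) = k by omega]
  rw [htk, htk1]
  ring

theorem majority_error_strict_anti (p : ℝ) (hp0 : 0 < p) (hp : p < 1/2) :
    StrictAnti (fun k : ℕ => ∑ l ∈ Finset.Icc (k + 1) (2 * k + 1),
      ((2 * k + 1).choose l : ℝ) * p ^ l * (1 - p) ^ (2 * k + 1 - l)) := by
  apply strictAnti_nat_of_succ_lt
  intro k
  show (∑ l ∈ Finset.Icc (k + 1 + 1) (2 * (k + 1) + 1),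
      ((2 * (k + 1) + 1).choose l : ℝ) * p ^ l * (1 - p) ^ (2 * (k + 1) + 1 - l))
    < ∑ l ∈ Finset.Icc (k + 1) (2 * k + 1),
      ((2 * k + 1).choose l : ℝ) * p ^ l * (1 - p) ^ (2 * k + 1 - l)
  rw [majority_key p k]
  have hC : (0 : ℝ) < ((2 * k + 1).choose k : ℝ) := by
    exact_mod_cast Nat.choose_pos (by omega)
  have h1 : (0 : ℝ) < p ^ (k + 1) := by positivity
  have h2 : (0 : ℝ) < (1 - p) ^ (k + 1) := by
    apply pow_pos; linarith
  nlinarith [mul_pos (mul_pos hC h1) h2]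
end
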